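/- Let A be a finitely generated normal M-graded domain over a field K of characteristic 0, and let ∂ be a derivation on A. Then ∂ decomposes as a finite sum ∂ = Σ_{e ∈ M} ∂_e, where each ∂_e is a homogeneous derivation of degree e; moreover if ∂ is locally nilpotent and e is a vertex of the convex hull Δ(∂) of {e ∈ M : ∂_e ≠ 0} in M_ℚ, then ∂_e is locally nilpotent. -/

import Mathlib

/-!
Write `∂_e` for the part of `∂` raising degrees by `e`: on `a ∈ A_m` it is the degree `m + e`
component of `∂ a`. Each `∂_e` is again a derivation, and only finitely many are nonzero because
`∂` is determined by its values on finitely many homogeneous generators.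

For local nilpotency, note that the degree `m + k e` component of `∂^k a`, for `a ∈ A_m`, is a sum of
terms `∂_{e_k} ⋯ ∂_{e_1} a` with `e_1 + ⋯ + e_k = k e` and every `∂_{e_i} ≠ 0`. If `e` is a vertex
of `Δ(∂)`, the average of the `e_i` can only equal `e` when all `e_i = e`, so that component is
`∂_e^k a`; it vanishes once `∂^k a = 0`.
-/

noncomputable section

/-- Inclusion of the lattice `ℤⁿ` into `ℚⁿ`. -/
def toQ {n : ℕ} (v : Fin n → ℤ) : Fin n → ℚ := fun i => (v i : ℚ)

/-- A derivation is locally nilpotent if every element is annihilated by some iterate. -/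
def IsLND {R A : Type*} [CommRing R] [CommRing A] [Algebra R A]
    (D : Derivation R A A) : Prop :=
  ∀ a : A, ∃ k : ℕ, (⇑D)^[k] a = 0

open DirectSum GradedAlgebra

theorem Convex.eq_of_mem_extremePoints_of_sum_eq_nsmul {𝕜 E ι : Type*} [Field 𝕜] [LinearOrder 𝕜]
    [IsStrictOrderedRing 𝕜] [AddCommGroup E] [Module 𝕜 E] {C : Set E} (hC : Convex 𝕜 C) {x : E}
    (hx : x ∈ C.extremePoints 𝕜) {t : Finset ι} {f : ι → E} (hf : ∀ i ∈ t, f i ∈ C)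
    (hsum : ∑ i ∈ t, f i = t.card • x) : ∀ i ∈ t, f i = x := by
  classical
  by_contra! ⟨j, hj, hne⟩
  set J := t.filter (f · ≠ x)
  have hJ : (J.card : 𝕜) ≠ 0 := Nat.cast_ne_zero.2 (Finset.card_ne_zero.2 ⟨j, by simp [J, hj, hne]⟩)
  have hsumJ : ∑ i ∈ J, f i = J.card • x := by
    have hrest : ∑ i ∈ t.filter (¬ f · ≠ x), f i = (t.filter (¬ f · ≠ x)).card • x := by
      rw [Finset.sum_congr rfl fun i hi => not_not.1 (Finset.mem_filter.1 hi).2, Finset.sum_const]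
    rw [← Finset.card_filter_add_card_filter_not (f · ≠ x),
      ← Finset.sum_filter_add_sum_filter_not t (f · ≠ x), hrest, add_nsmul] at hsum
    exact add_right_cancel hsum
  -- The average of the points of `J` is `x`, yet lies in the convex set `C \ {x}`.
  have hmem : ∑ i ∈ J, (J.card : 𝕜)⁻¹ • f i ∈ C \ {x} :=
    ((hC.mem_extremePoints_iff_convex_sdiff.1 hx).2).sum_mem (fun _ _ => by positivity)
      (by rw [Finset.sum_const, nsmul_eq_mul, mul_inv_cancel₀ hJ])
      fun i hi => ⟨hf i (Finset.mem_filter.1 hi).1, (Finset.mem_filter.1 hi).2⟩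
  rw [← Finset.smul_sum, hsumJ, ← Nat.cast_smul_eq_nsmul 𝕜, smul_smul, inv_mul_cancel₀ hJ,
    one_smul] at hmem
  exact hmem.2 rfl

theorem eq_of_map_mem_extremePoints_of_sum_eq_nsmul {𝕜 E ι : Type*} [Field 𝕜] [LinearOrder 𝕜]
    [IsStrictOrderedRing 𝕜] [AddCommGroup E] [Module 𝕜 E] [AddCommMonoid ι] {φ : ι →+ E}
    (hφ : Function.Injective φ) {S : Set ι} {e : ι}
    (he : φ e ∈ (convexHull 𝕜 (φ '' S)).extremePoints 𝕜) {k : ℕ} {f : Fin k → ι}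
    (hf : ∀ i, f i ∈ S) (hsum : ∑ i, f i = k • e) (i : Fin k) : f i = e :=
  hφ <| (convex_convexHull 𝕜 _).eq_of_mem_extremePoints_of_sum_eq_nsmul he
    (fun j _ => subset_convexHull 𝕜 _ (Set.mem_image_of_mem φ (hf j)))
    (by rw [← map_sum, hsum, map_nsmul, Finset.card_univ, Fintype.card_fin]) i (Finset.mem_univ i)

theorem toQ_eq_compLeft {n : ℕ} : (toQ : (Fin n → ℤ) → Fin n → ℚ) =
    (Int.castAddHom ℚ).compLeft (Fin n) := rfl

theorem iterate_eq_zero_of_le {M F : Type*} [AddMonoid M] [FunLike F M M] [AddMonoidHomClass F M M]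
    (f : F) {a : M} {k l : ℕ} (hk : (⇑f)^[k] a = 0) (hkl : k ≤ l) : (⇑f)^[l] a = 0 := by
  rw [← Nat.sub_add_cancel hkl, Function.iterate_add_apply, hk, iterate_map_zero]

theorem GradedAlgebra.proj_mem {ι R A : Type*} [DecidableEq ι] [AddMonoid ι] [CommSemiring R]
    [Semiring A] [Algebra R A] {𝒜 : ι → Submodule R A} [GradedAlgebra 𝒜] (t : ι) (x : A) :
    proj 𝒜 t x ∈ 𝒜 t :=
  (decompose 𝒜 x t).2

namespace Derivation

variable {ι R A : Type*} [AddCommGroup ι] [DecidableEq ι] [CommSemiring R] [CommRing A]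
  [Algebra R A] (𝒜 : ι → Submodule R A) [GradedAlgebra 𝒜] (D : Derivation R A A)

def homogeneousComponentAux (e : ι) : A →ₗ[R] A :=
  toModule R ι A (fun m => proj 𝒜 (m + e) ∘ₗ D.toLinearMap ∘ₗ (𝒜 m).subtype) ∘ₗ
    (decomposeLinearEquiv 𝒜).toLinearMap

variable {𝒜}

theorem proj_apply_eq_sum_support [∀ (i : ι) (x : 𝒜 i), Decidable (x ≠ 0)] (t : ι) (x : A) :
    proj 𝒜 t (D x) = ∑ u ∈ (decompose 𝒜 x).support, proj 𝒜 t (D (proj 𝒜 u x)) := by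
  conv_lhs => rw [← sum_support_decompose 𝒜 x]
  simp only [map_sum, proj_apply]

theorem homogeneousComponentAux_apply_of_mem (e : ι) {m : ι} {a : A} (ha : a ∈ 𝒜 m) :
    D.homogeneousComponentAux 𝒜 e a = proj 𝒜 (m + e) (D a) := by
  simp only [homogeneousComponentAux, LinearMap.comp_apply, LinearEquiv.coe_coe,
    decomposeLinearEquiv_apply, decompose_of_mem 𝒜 ha, ← lof_eq_of R, toModule_lof]
  rfl

theorem homogeneousComponentAux_mul (e : ι) (a b : A) :
    D.homogeneousComponentAux 𝒜 e (a * b) =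
      a * D.homogeneousComponentAux 𝒜 e b + b * D.homogeneousComponentAux 𝒜 e a := by
  induction a using DirectSum.Decomposition.inductionOn 𝒜 generalizing b with
  | zero => simp
  | add x x' hx hx' => rw [add_mul, map_add, hx, hx', map_add]; ring
  | @homogeneous p a =>
    obtain ⟨a, ha⟩ := a
    induction b using DirectSum.Decomposition.inductionOn 𝒜 with
    | zero => simp
    | add y y' hy hy' => rw [mul_add, map_add, hy, hy', map_add]; ring
    | @homogeneous q b =>
      obtain ⟨b, hb⟩ := b
      rw [homogeneousComponentAux_apply_of_mem D e (SetLike.mul_mem_graded ha hb),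
        homogeneousComponentAux_apply_of_mem D e ha, homogeneousComponentAux_apply_of_mem D e hb,
        leibniz, smul_eq_mul, smul_eq_mul, map_add, proj_apply, proj_apply, proj_apply,
        proj_apply, show p + q + e = p + (q + e) by abel,
        coe_decompose_mul_add_of_left_mem 𝒜 ha, show p + (q + e) = q + (p + e) by abel,
        coe_decompose_mul_add_of_left_mem 𝒜 hb]

variable (𝒜)

def homogeneousComponent (e : ι) : Derivation R A A where
  toLinearMap := D.homogeneousComponentAux 𝒜 e
  map_one_eq_zero' := by
    simp [homogeneousComponentAux_apply_of_mem D e SetLike.GradedOne.one_mem]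
  leibniz' a b := by simp [homogeneousComponentAux_mul]

variable {𝒜}

theorem homogeneousComponent_apply_of_mem (e : ι) {m : ι} {a : A} (ha : a ∈ 𝒜 m) :
    D.homogeneousComponent 𝒜 e a = proj 𝒜 (m + e) (D a) :=
  D.homogeneousComponentAux_apply_of_mem e ha

theorem homogeneousComponent_mem (e : ι) {m : ι} {a : A} (ha : a ∈ 𝒜 m) :
    D.homogeneousComponent 𝒜 e a ∈ 𝒜 (m + e) := by
  rw [homogeneousComponent_apply_of_mem D e ha]
  exact proj_mem _ _

theorem homogeneousComponent_ne_zero {m t : ι} {a : A} (ha : a ∈ 𝒜 m)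
    (h : proj 𝒜 t (D a) ≠ 0) : D.homogeneousComponent 𝒜 (t - m) ≠ 0 := by
  intro h0
  apply h
  rw [← add_sub_cancel m t, ← homogeneousComponent_apply_of_mem D _ ha, h0, zero_apply]

variable (𝒜) in
theorem finite_setOf_homogeneousComponent_ne_zero [Algebra.FiniteType R A] :
    {e | D.homogeneousComponent 𝒜 e ≠ 0}.Finite := by
  classical
  obtain ⟨S, hS⟩ := Algebra.FiniteType.out (R := R) (A := A)
  refine (S.biUnion fun g => (decompose 𝒜 g).support.biUnion fun m =>
    (decompose 𝒜 (D (decompose 𝒜 g m))).support.image (· - m)).finite_toSet.subset fun e he => ?_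
  obtain ⟨g, hg, hne⟩ : ∃ g ∈ S, D.homogeneousComponent 𝒜 e g ≠ 0 := by
    by_contra! h
    exact he (ext_of_adjoin_eq_top (S : Set A) hS h)
  rw [← sum_support_decompose 𝒜 g, map_sum] at hne
  obtain ⟨m, hm, hne⟩ := Finset.exists_ne_zero_of_sum_ne_zero hne
  rw [homogeneousComponent_apply_of_mem D e (decompose 𝒜 g m).2] at hne
  simp only [Finset.coe_biUnion, Finset.coe_image, Set.mem_iUnion, Set.mem_image]
  exact ⟨g, hg, m, hm, m + e, DFinsupp.mem_support_iff.2 fun h0 => hne (by simp [h0]),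
    add_sub_cancel_left m e⟩

theorem eq_sum_homogeneousComponent {s : Finset ι}
    (hs : ∀ e ∉ s, D.homogeneousComponent 𝒜 e = 0) :
    D = ∑ e ∈ s, D.homogeneousComponent 𝒜 e := by
  classical
  ext a
  induction a using DirectSum.Decomposition.inductionOn 𝒜 with
  | zero => simp
  | add x y hx hy => rw [map_add, hx, hy, map_add]
  | @homogeneous m a =>
    obtain ⟨a, ha⟩ := a
    rw [← coeFnAddMonoidHom_apply (∑ e ∈ s, _), map_sum, Finset.sum_apply]
    simp only [coeFnAddMonoidHom_apply, homogeneousComponent_apply_of_mem D _ ha]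
    rw [← Finset.sum_image (f := fun t => proj 𝒜 t (D a)) fun x _ y _ h => add_left_cancel h]
    conv_lhs => rw [← sum_support_decompose 𝒜 (D a)]
    refine Finset.sum_subset (fun t ht => ?_) fun t _ ht => ?_
    · have hne := D.homogeneousComponent_ne_zero ha ((mem_support_iff 𝒜 _ _).1 ht)
      exact Finset.mem_image.2 ⟨t - m, by_contra fun h => hne (hs _ h), add_sub_cancel m t⟩
    · simp [DFinsupp.notMem_support_iff.1 ht]

theorem exists_fin_sum_of_proj_iterate_ne_zero {m : ι} {a : A} (ha : a ∈ 𝒜 m) :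
    ∀ {k : ℕ} {t : ι}, proj 𝒜 t ((⇑D)^[k] a) ≠ 0 →
      ∃ f : Fin k → ι, (∀ i, D.homogeneousComponent 𝒜 (f i) ≠ 0) ∧ t = m + ∑ i, f i
  | 0, t, h => ⟨Fin.elim0, fun i => i.elim0, by
      by_contra hne
      exact h (by simpa using decompose_of_mem_ne 𝒜 ha fun h' => hne (by simp [h']))⟩
  | k + 1, t, h => by
    classical
    rw [Function.iterate_succ_apply', proj_apply_eq_sum_support] at h
    obtain ⟨u, -, hu⟩ := Finset.exists_ne_zero_of_sum_ne_zero h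
    obtain ⟨f, hf, rfl⟩ := exists_fin_sum_of_proj_iterate_ne_zero ha (k := k) (t := u)
      fun h0 => hu (by rw [h0, map_zero, map_zero])
    have hlast := D.homogeneousComponent_ne_zero (GradedAlgebra.proj_mem _ _) hu
    exact ⟨Fin.snoc f (t - (m + ∑ i, f i)),
      fun i => Fin.lastCases (by simpa using hlast) (fun j => by simpa using hf j) i,
      by rw [Fin.sum_snoc]; abel⟩

theorem iterate_homogeneousComponent_apply_of_mem {e : ι}
    (he : ∀ (k : ℕ) (f : Fin k → ι), (∀ i, D.homogeneousComponent 𝒜 (f i) ≠ 0) →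
      ∑ i, f i = k • e → ∀ i, f i = e)
    {m : ι} {a : A} (ha : a ∈ 𝒜 m) (k : ℕ) :
    (⇑(D.homogeneousComponent 𝒜 e))^[k] a = proj 𝒜 (m + k • e) ((⇑D)^[k] a) := by
  classical
  induction k with
  | zero => simp [decompose_of_mem_same 𝒜 ha]
  | succ k ih =>
    rw [Function.iterate_succ_apply', ih, homogeneousComponent_apply_of_mem D e (GradedAlgebra.proj_mem _ _),
      Function.iterate_succ_apply', proj_apply_eq_sum_support D (m + (k + 1) • e) ((⇑D)^[k] a),
      Finset.sum_eq_single (m + k • e),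
      succ_nsmul, add_assoc]
    · intro u _ hu
      by_contra h
      obtain ⟨f, hf, rfl⟩ := exists_fin_sum_of_proj_iterate_ne_zero D ha (k := k) (t := u)
        fun h0 => h (by rw [h0, map_zero, map_zero])
      have hlast := D.homogeneousComponent_ne_zero (GradedAlgebra.proj_mem _ _) h
      have hconst := he (k + 1) (Fin.snoc f (m + (k + 1) • e - (m + ∑ i, f i)))
        (fun i => Fin.lastCases (by simpa using hlast) (fun j => by simpa using hf j) i)
        (by rw [Fin.sum_snoc]; abel)
      refine hu ?_
      rw [Finset.sum_congr rfl fun j _ => by simpa using hconst j.castSucc]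
      simp
    · intro hu
      simp [DFinsupp.notMem_support_iff.1 hu]

end Derivation

theorem isLND_of_forall_mem_homogeneous {ι R A : Type*} [DecidableEq ι] [AddMonoid ι]
    [CommRing R] [CommRing A] [Algebra R A] (𝒜 : ι → Submodule R A) [GradedAlgebra 𝒜]
    {D : Derivation R A A} (hD : ∀ m, ∀ a ∈ 𝒜 m, ∃ k, (⇑D)^[k] a = 0) : IsLND D := by
  intro a
  induction a using DirectSum.Decomposition.inductionOn 𝒜 with
  | zero => exact ⟨0, rfl⟩
  | @homogeneous m a => exact hD m a a.2
  | add x y hx hy =>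
    obtain ⟨k, hk⟩ := hx
    obtain ⟨l, hl⟩ := hy
    exact ⟨max k l, by rw [iterate_map_add, iterate_eq_zero_of_le D hk (le_max_left k l),
      iterate_eq_zero_of_le D hl (le_max_right k l), add_zero]⟩

theorem stmt13_general {n : ℕ} {K A : Type*} [Field K]
    [CommRing A] [Algebra K A]
    (𝒜 : (Fin n → ℤ) → Submodule K A) [GradedAlgebra 𝒜]
    (hfg : Algebra.FiniteType K A)
    (D : Derivation K A A) :
    ∃ (s : Finset (Fin n → ℤ)) (Δ : (Fin n → ℤ) → Derivation K A A),
      (∀ e, e ∉ s → Δ e = 0) ∧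
      D = ∑ e ∈ s, Δ e ∧
      (∀ e m, ∀ a ∈ 𝒜 m, Δ e a ∈ 𝒜 (m + e)) ∧
      (IsLND D → ∀ e : Fin n → ℤ, Δ e ≠ 0 →
        toQ e ∈ Set.extremePoints ℚ (convexHull ℚ (toQ '' {e' | Δ e' ≠ 0})) →
        IsLND (Δ e)) := by
  have hfin := D.finite_setOf_homogeneousComponent_ne_zero 𝒜
  have hvanish : ∀ e ∉ hfin.toFinset, D.homogeneousComponent 𝒜 e = 0 := by simp
  refine ⟨hfin.toFinset, D.homogeneousComponent 𝒜, hvanish, D.eq_sum_homogeneousComponent hvanish,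
    fun e m a ha => D.homogeneousComponent_mem e ha, fun hD e _ he => ?_⟩
  rw [toQ_eq_compLeft] at he
  have hconst := fun k f hf => eq_of_map_mem_extremePoints_of_sum_eq_nsmul
    Int.cast_injective.comp_left he (k := k) (f := f) hf
  exact isLND_of_forall_mem_homogeneous 𝒜 fun m a ha => (hD a).imp fun k hk => by
    rw [D.iterate_homogeneousComponent_apply_of_mem hconst ha, hk, map_zero]

/-- Lemma 1.10: any derivation `∂` of a finitely generated normal `ℤⁿ`-graded domain
decomposes as a finite sum `∂ = Σ_e ∂_e` of homogeneous derivations `∂_e` of degree `e`;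
moreover, if `∂` is locally nilpotent and `e` is a vertex (extreme point) of the convex
hull of `{e : ∂_e ≠ 0}` in `M_ℚ`, then `∂_e` is locally nilpotent. -/
theorem stmt13 {n : ℕ} {K A : Type*} [Field K] [CharZero K]
    [CommRing A] [IsDomain A] [Algebra K A]
    (𝒜 : (Fin n → ℤ) → Submodule K A) [GradedAlgebra 𝒜]
    (hfg : Algebra.FiniteType K A) (hnorm : IsIntegrallyClosed A)
    (D : Derivation K A A) :
    ∃ (s : Finset (Fin n → ℤ)) (Δ : (Fin n → ℤ) → Derivation K A A),
      (∀ e, e ∉ s → Δ e = 0) ∧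
      D = ∑ e ∈ s, Δ e ∧
      (∀ e m, ∀ a ∈ 𝒜 m, Δ e a ∈ 𝒜 (m + e)) ∧
      (IsLND D → ∀ e : Fin n → ℤ, Δ e ≠ 0 →
        toQ e ∈ Set.extremePoints ℚ (convexHull ℚ (toQ '' {e' | Δ e' ≠ 0})) →
        IsLND (Δ e)) :=
  stmt13_general 𝒜 hfg D

end
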